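/- arXiv:2211.00953 — 2 statements merged into one kernel-verified Lean document; each statement's English description precedes it below -/
import Mathlib

section
/- (Greenbaum, 1979) Let A be an N×N real symmetric positive definite matrix with eigenvalues λ₁,…,λ_N, and let d(A) be the degree of the minimal polynomial of A. Then for every step k ≤ d(A) there exists a nonzero initial residual r₀ ∈ ℝ^N (equivalently, vectors b and x₀ with r₀ = b − Ax₀ and x₀ ≠ A⁻¹b) such that the minimum over z ∈ x₀ + K_k(A,r₀) of ‖A⁻¹b − z‖_A equals ‖A⁻¹b − x₀‖_A times the min over p ∈ P_k(0) of max over 1 ≤ i ≤ N of |p(λ_i)|; i.e., the worst-case bound for CG given by the polynomial min-max problem on the spectrum is attained. -/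
/-!
Among the `(k+1)`-element subsets `T` of the spectrum choose one minimising
`L(T) = ∑_{t ∈ T} |ℓ_t(0)|`, where `ℓ_t` are the Lagrange basis polynomials of the nodes `T`.
Every `q` of degree `≤ k` with `q(0) = 1` satisfies `1 = ∑_t q(t) ℓ_t(0) ≤ L(T) max_T |q|`, and the
interpolant `p` of the values `sign ℓ_t(0) / L(T)` attains this bound on `T`. If `|p(ν)| > 1/L(T)`
at some eigenvalue `ν`, exchanging a suitable node of `T` for `ν` gives a set on which `p` still
alternates in sign against the new `ℓ_t(0)`, and then `1 = p(0)` forces a smaller `L`; so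
`|p| ≤ 1/L(T)` on the whole spectrum and the min-max value is `1/L(T)`.

Give the initial error `e` the weight `|ℓ_t(0)| / t` on the eigenvalue `t ∈ T`. Then `p(A) e` is
`A`-orthogonal to `K_k(A, A e)`, because `∑_t t^j ℓ_t(0) = 0` for `1 ≤ j ≤ k`, so it is the error
of the best approximation from `K_k(A, A e)`, and `‖p(A) e‖_A = ‖e‖_A / L(T)`. When `k` reaches
the number of distinct eigenvalues, both sides vanish.
-/

open Matrix Polynomial

/-- The `A`-norm `‖v‖_A = (vᵀ A v)^{1/2}`. -/
noncomputable def Anorm {N : ℕ} (A : Matrix (Fin N) (Fin N) ℝ) (v : Fin N → ℝ) : ℝ :=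
  Real.sqrt (v ⬝ᵥ A *ᵥ v)

/-- The `k`-th Krylov subspace `K_k(A, r) = span {r, Ar, …, A^{k-1} r}`. -/
def krylov {N : ℕ} (A : Matrix (Fin N) (Fin N) ℝ) (r : Fin N → ℝ) (k : ℕ) :
    Submodule ℝ (Fin N → ℝ) :=
  Submodule.span ℝ {v | ∃ i < k, v = (A ^ i) *ᵥ r}

open Finset Pointwise

theorem degree_lt_succ_iff_natDegree_le {R : Type*} [Semiring R] {p : R[X]} {k : ℕ} :
    p.degree < ↑(k + 1) ↔ p.natDegree ≤ k :=
  ⟨fun h => natDegree_le_of_degree_le (Order.le_of_lt_succ h),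
   fun h => (degree_le_of_natDegree_le h).trans_lt (by exact_mod_cast k.lt_succ_self)⟩

theorem abs_sum_eq_sum_abs_of_mul_pos {ι : Type*} {s : Finset ι} {f : ι → ℝ} {a : ι}
    (h : ∀ t ∈ s, 0 < f t * f a) : |∑ t ∈ s, f t| = ∑ t ∈ s, |f t| := by
  rcases le_or_gt (f a) 0 with ha | ha
  · have hneg : ∀ t ∈ s, f t < 0 := fun t ht => neg_of_mul_pos_left (h t ht) ha
    rw [abs_of_nonpos (sum_nonpos fun t ht => (hneg t ht).le), ← sum_neg_distrib]
    exact sum_congr rfl fun t ht => (abs_of_neg (hneg t ht)).symm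
  · have hpos : ∀ t ∈ s, 0 < f t := fun t ht => pos_of_mul_pos_left (h t ht) ha.le
    rw [abs_of_nonneg (sum_nonneg fun t ht => (hpos t ht).le)]
    exact sum_congr rfl fun t ht => (abs_of_pos (hpos t ht)).symm

noncomputable def lagrangeBasisAtZero (T : Finset ℝ) (t : ℝ) : ℝ :=
  ∏ s ∈ T.erase t, s / (s - t)

noncomputable def lebesgueAtZero (T : Finset ℝ) : ℝ :=
  ∑ t ∈ T, |lagrangeBasisAtZero T t|

theorem eval_zero_eq_sum_mul_lagrangeBasisAtZero {T : Finset ℝ} {p : ℝ[X]}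
    (hp : p.degree < #T) : p.eval 0 = ∑ t ∈ T, p.eval t * lagrangeBasisAtZero T t := by
  have hinj : Set.InjOn id (T : Set ℝ) := Function.injective_id.injOn
  conv_lhs => rw [Lagrange.eq_interpolate hinj hp]
  simp only [Lagrange.interpolate_apply, eval_finsetSum, eval_mul, eval_C, Lagrange.basis,
    eval_prod, Lagrange.basisDivisor, id, lagrangeBasisAtZero]
  refine sum_congr rfl fun t _ => congrArg _ (prod_congr rfl fun s _ => ?_)
  simp only [eval_C, eval_sub, eval_X, zero_sub]
  rw [← neg_sub, inv_neg]
  ring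

theorem lagrangeBasisAtZero_ne_zero {T : Finset ℝ} (h0 : 0 ∉ T) (t : ℝ) :
    lagrangeBasisAtZero T t ≠ 0 :=
  prod_ne_zero_iff.mpr fun _ hs => div_ne_zero (ne_of_mem_of_not_mem (mem_of_mem_erase hs) h0)
    (sub_ne_zero.mpr (ne_of_mem_erase hs))

theorem lagrangeBasisAtZero_insert {T : Finset ℝ} {a t : ℝ} (ha : a ∉ T) (hta : t ≠ a) :
    lagrangeBasisAtZero (insert a T) t = a / (a - t) * lagrangeBasisAtZero T t := by
  rw [lagrangeBasisAtZero, erase_insert_of_ne hta.symm,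
    prod_insert fun h => ha (mem_of_mem_erase h), lagrangeBasisAtZero]

theorem lagrangeBasisAtZero_insert_self {T : Finset ℝ} {a : ℝ} (ha : a ∉ T) :
    lagrangeBasisAtZero (insert a T) a = lagrangeBasisAtZero T a := by
  rw [lagrangeBasisAtZero, erase_insert ha, lagrangeBasisAtZero, erase_eq_of_notMem ha]

theorem lebesgueAtZero_nonneg (T : Finset ℝ) : 0 ≤ lebesgueAtZero T :=
  sum_nonneg fun _ _ => abs_nonneg _

theorem lebesgueAtZero_pos {T : Finset ℝ} (h0 : 0 ∉ T) (hT : T.Nonempty) :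
    0 < lebesgueAtZero T := by
  obtain ⟨t, ht⟩ := hT
  exact sum_pos' (fun _ _ => abs_nonneg _) ⟨t, ht, abs_pos.mpr (lagrangeBasisAtZero_ne_zero h0 t)⟩

theorem one_le_mul_lebesgueAtZero {T : Finset ℝ} {p : ℝ[X]} {M : ℝ} (hp : p.degree < #T)
    (hp0 : p.eval 0 = 1) (hM : ∀ t ∈ T, |p.eval t| ≤ M) : 1 ≤ M * lebesgueAtZero T :=
  calc 1 = |∑ t ∈ T, p.eval t * lagrangeBasisAtZero T t| := by
        rw [← eval_zero_eq_sum_mul_lagrangeBasisAtZero hp, hp0, abs_one]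
    _ ≤ ∑ t ∈ T, |p.eval t| * |lagrangeBasisAtZero T t| := by
        simpa only [abs_mul] using
          abs_sum_le_sum_abs (fun t => p.eval t * lagrangeBasisAtZero T t) T
    _ ≤ ∑ t ∈ T, M * |lagrangeBasisAtZero T t| :=
        sum_le_sum fun t ht => mul_le_mul_of_nonneg_right (hM t ht) (abs_nonneg _)
    _ = M * lebesgueAtZero T := by rw [lebesgueAtZero, mul_sum]

theorem mul_lebesgueAtZero_lt_one {U : Finset ℝ} {p : ℝ[X]} {M ν : ℝ} (h0 : 0 ∉ U)
    (hp : p.degree < #U) (hp0 : p.eval 0 = 1) (hν : ν ∈ U)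
    (hsign : ∀ t ∈ U, 0 < p.eval t * lagrangeBasisAtZero U t *
      (p.eval ν * lagrangeBasisAtZero U ν))
    (hM : ∀ t ∈ U, M ≤ |p.eval t|) (hMν : M < |p.eval ν|) : M * lebesgueAtZero U < 1 := by
  set f := fun t => p.eval t * lagrangeBasisAtZero U t
  calc M * lebesgueAtZero U = ∑ t ∈ U, M * |lagrangeBasisAtZero U t| := by
        rw [lebesgueAtZero, mul_sum]
    _ < ∑ t ∈ U, |f t| := by
        simp only [f, abs_mul]
        refine sum_lt_sum (fun t ht => mul_le_mul_of_nonneg_right (hM t ht) (abs_nonneg _))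
          ⟨ν, hν, mul_lt_mul_of_pos_right hMν (abs_pos.mpr (lagrangeBasisAtZero_ne_zero h0 ν))⟩
    _ = 1 := by
        rw [← abs_sum_eq_sum_abs_of_mul_pos hsign, ← eval_zero_eq_sum_mul_lagrangeBasisAtZero hp,
          hp0, abs_one]

theorem exists_exchange_of_pos {T : Finset ℝ} (hT : T.Nonempty) {ν : ℝ} (hν : ν ∉ T) {c : ℝ}
    (hc : 0 < c) : ∃ d ∈ T, ∀ t ∈ T.erase d, 0 < c * (ν - d) * ((t - d) * (t - ν)) := by
  -- Take for `d` the nearest node below `ν`, or the largest node if there is none: the other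
  -- nodes then lie all outside, resp. all inside, the interval between `d` and `ν`.
  by_cases hlow : {s ∈ T | s < ν}.Nonempty
  · obtain ⟨hdT, hdν⟩ := mem_filter.mp (max'_mem _ hlow)
    refine ⟨_, hdT, fun t ht => ?_⟩
    have htT := mem_of_mem_erase ht
    rcases (ne_of_mem_of_not_mem htT hν).lt_or_gt with htν | htν
    · have htd := (le_max' _ t (mem_filter.mpr ⟨htT, htν⟩)).lt_of_ne (ne_of_mem_erase ht)
      exact mul_pos (mul_pos hc (sub_pos.2 hdν))
        (mul_pos_of_neg_of_neg (sub_neg.2 htd) (sub_neg.2 htν))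
    · exact mul_pos (mul_pos hc (sub_pos.2 hdν))
        (mul_pos (sub_pos.2 (hdν.trans htν)) (sub_pos.2 htν))
  · refine ⟨T.max' hT, max'_mem T hT, fun t ht => ?_⟩
    have htT := mem_of_mem_erase ht
    have hνt : ν < t := ((ne_of_mem_of_not_mem htT hν).symm.lt_or_gt).resolve_right
      fun h => hlow ⟨t, mem_filter.mpr ⟨htT, h⟩⟩
    have htd := (le_max' T t htT).lt_of_ne (ne_of_mem_erase ht)
    exact mul_pos_of_neg_of_neg (mul_neg_of_pos_of_neg hc (sub_neg.2 (hνt.trans htd)))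
      (mul_neg_of_neg_of_pos (sub_neg.2 htd) (sub_pos.2 hνt))

theorem exists_exchange {T : Finset ℝ} (hT : T.Nonempty) {ν : ℝ} (hν : ν ∉ T) {c : ℝ}
    (hc : c ≠ 0) : ∃ d ∈ T, ∀ t ∈ T.erase d, 0 < c * (ν - d) * ((t - d) * (t - ν)) := by
  rcases hc.lt_or_gt with hc | hc
  · obtain ⟨d, hd, h⟩ := exists_exchange_of_pos (T := -T) hT.neg (ν := -ν)
      (by rwa [mem_neg', neg_neg]) (neg_pos.2 hc)
    refine ⟨-d, mem_neg'.mp hd, fun t ht => ?_⟩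
    have := h (-t) (mem_erase.mpr ⟨fun h => (ne_of_mem_erase ht) (by rw [← h, neg_neg]),
      by rw [mem_neg', neg_neg]; exact mem_of_mem_erase ht⟩)
    convert this using 1
    ring
  · exact exists_exchange_of_pos hT hν hc

/-- The weights `ℓ_t(0)` of `T` and of `insert ν (T.erase d)` are those of `T.erase d` times
`d / (d - t)` resp. `ν / (ν - t)`, so their signs differ by the sign of `(t - d) * (t - ν)`. -/
theorem mul_pos_of_exchange {T : Finset ℝ} {d ν t x y : ℝ} (hd : d ∈ T)
    (hν : ν ∉ T) (hν0 : 0 < ν) (ht : t ∈ T.erase d) (hx : 0 < x * lagrangeBasisAtZero T t)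
    (hexch : 0 < -(y * lagrangeBasisAtZero T ν) * (ν - d) * ((t - d) * (t - ν))) :
    0 < x * lagrangeBasisAtZero (insert ν (T.erase d)) t *
      (y * lagrangeBasisAtZero (insert ν (T.erase d)) ν) := by
  have hνd : ν ∉ T.erase d := fun h => hν (mem_of_mem_erase h)
  have htν : t ≠ ν := ne_of_mem_of_not_mem (mem_of_mem_erase ht) hν
  have hdt : d - t ≠ 0 := sub_ne_zero.2 (ne_of_mem_erase ht).symm
  have hdν : d - ν ≠ 0 := sub_ne_zero.2 (ne_of_mem_of_not_mem hd hν)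
  have hνt : ν - t ≠ 0 := sub_ne_zero.2 htν.symm
  rw [← insert_erase hd, lagrangeBasisAtZero_insert (notMem_erase d T) (ne_of_mem_erase ht)] at hx
  rw [← insert_erase hd, lagrangeBasisAtZero_insert (notMem_erase d T)
    (ne_of_mem_of_not_mem hd hν).symm] at hexch
  rw [lagrangeBasisAtZero_insert hνd htν, lagrangeBasisAtZero_insert_self hνd]
  set a := x * lagrangeBasisAtZero (T.erase d) t
  set b := y * lagrangeBasisAtZero (T.erase d) ν
  have key : 0 < a * b * (ν - t) := by
    have h := mul_pos hx hexch
    have e : x * (d / (d - t) * lagrangeBasisAtZero (T.erase d) t) *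
        (-(y * (d / (d - ν) * lagrangeBasisAtZero (T.erase d) ν)) * (ν - d) *
          ((t - d) * (t - ν))) = d ^ 2 * (a * b * (ν - t)) := by
      field_simp
      ring
    rw [e] at h
    exact pos_of_mul_pos_right h (sq_nonneg d)
  have e : x * (ν / (ν - t) * lagrangeBasisAtZero (T.erase d) t) *
      (y * lagrangeBasisAtZero (T.erase d) ν) = ν * (a * b * (ν - t)) / (ν - t) ^ 2 := by
    field_simp
    ring
  rw [e]
  exact div_pos (mul_pos hν0 key) (by positivity)

noncomputable def equioscillant (T : Finset ℝ) : ℝ[X] :=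
  Lagrange.interpolate T id fun t =>
    (lebesgueAtZero T)⁻¹ * SignType.sign (lagrangeBasisAtZero T t)

section Equioscillant

variable {T : Finset ℝ} {t : ℝ}

theorem degree_equioscillant_lt (T : Finset ℝ) : (equioscillant T).degree < #T :=
  Lagrange.degree_interpolate_lt _ Function.injective_id.injOn

theorem natDegree_equioscillant_le {k : ℕ} (hT : #T = k + 1) :
    (equioscillant T).natDegree ≤ k :=
  degree_lt_succ_iff_natDegree_le.mp (hT ▸ degree_equioscillant_lt T)

theorem eval_equioscillant (ht : t ∈ T) : (equioscillant T).eval t =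
    (lebesgueAtZero T)⁻¹ * SignType.sign (lagrangeBasisAtZero T t) :=
  Lagrange.eval_interpolate_at_node _ Function.injective_id.injOn ht

theorem eval_equioscillant_mul (ht : t ∈ T) : (equioscillant T).eval t *
    lagrangeBasisAtZero T t = (lebesgueAtZero T)⁻¹ * |lagrangeBasisAtZero T t| := by
  rw [eval_equioscillant ht, mul_assoc, sign_mul_self]

theorem eval_equioscillant_mul_abs (ht : t ∈ T) : (equioscillant T).eval t *
    |lagrangeBasisAtZero T t| = (lebesgueAtZero T)⁻¹ * lagrangeBasisAtZero T t := by
  rw [eval_equioscillant ht, mul_assoc, sign_mul_abs]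

theorem abs_eval_equioscillant (h0 : 0 ∉ T) (ht : t ∈ T) :
    |(equioscillant T).eval t| = (lebesgueAtZero T)⁻¹ := by
  have h := congrArg abs (eval_equioscillant_mul ht)
  rw [abs_mul, abs_mul, abs_abs, abs_inv,
    abs_of_nonneg (lebesgueAtZero_nonneg T)] at h
  exact mul_right_cancel₀ (abs_ne_zero.2 (lagrangeBasisAtZero_ne_zero h0 t)) h

theorem eval_zero_equioscillant (h0 : 0 ∉ T) (hT : T.Nonempty) :
    (equioscillant T).eval 0 = 1 := by
  rw [eval_zero_eq_sum_mul_lagrangeBasisAtZero (degree_equioscillant_lt T),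
    sum_congr rfl fun t ht => eval_equioscillant_mul ht, ← mul_sum]
  exact inv_mul_cancel₀ (lebesgueAtZero_pos h0 hT).ne'

theorem sum_eval_equioscillant_mul_mul_abs {r : ℝ[X]} (hr : r.degree < #T) :
    ∑ t ∈ T, (equioscillant T).eval t * r.eval t * |lagrangeBasisAtZero T t| =
      (lebesgueAtZero T)⁻¹ * r.eval 0 := by
  rw [eval_zero_eq_sum_mul_lagrangeBasisAtZero hr, mul_sum]
  refine sum_congr rfl fun t ht => ?_
  rw [mul_right_comm, eval_equioscillant_mul_abs ht]
  ring

end Equioscillant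

theorem abs_eval_equioscillant_le {Λ T : Finset ℝ} (hΛ : ∀ s ∈ Λ, 0 < s) (hTΛ : T ⊆ Λ)
    (hT : T.Nonempty) (hmin : ∀ T' ⊆ Λ, #T' = #T → lebesgueAtZero T ≤ lebesgueAtZero T')
    {ν : ℝ} (hν : ν ∈ Λ) : |(equioscillant T).eval ν| ≤ (lebesgueAtZero T)⁻¹ := by
  have h0 : ∀ {U : Finset ℝ}, U ⊆ Λ → 0 ∉ U := fun hU h => (hΛ 0 (hU h)).false
  have hL := lebesgueAtZero_pos (h0 hTΛ) hT
  set p := equioscillant T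
  by_contra! hlt
  have hνT : ν ∉ T := fun h => hlt.ne' (abs_eval_equioscillant (h0 hTΛ) h)
  have hpν : p.eval ν ≠ 0 := fun h => by
    rw [h, abs_zero] at hlt
    exact (inv_pos.2 hL).not_gt hlt
  obtain ⟨d, hd, hexch⟩ := exists_exchange hT hνT
    (neg_ne_zero.2 (mul_ne_zero hpν (lagrangeBasisAtZero_ne_zero (h0 hTΛ) ν)))
  set T' := insert ν (T.erase d)
  have hT'Λ : T' ⊆ Λ := insert_subset hν ((erase_subset d T).trans hTΛ)
  have hcard : #T' = #T := by
    rw [card_insert_of_notMem fun h => hνT (mem_of_mem_erase h), card_erase_add_one hd]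
  -- `p` alternates against the weights of the exchanged set `T'`, which therefore beats `T`.
  have hlt' : (lebesgueAtZero T)⁻¹ * lebesgueAtZero T' < 1 := by
    refine mul_lebesgueAtZero_lt_one (h0 hT'Λ) (hcard ▸ degree_equioscillant_lt T)
      (eval_zero_equioscillant (h0 hTΛ) hT) (mem_insert_self ν _) (fun t ht => ?_)
      (fun t ht => ?_) hlt
    · rcases mem_insert.mp ht with rfl | ht
      · exact mul_self_pos.2 (mul_ne_zero hpν (lagrangeBasisAtZero_ne_zero (h0 hT'Λ) _))
      · refine mul_pos_of_exchange hd hνT (hΛ ν hν) ht ?_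
          (hexch t ht)
        rw [eval_equioscillant_mul (mem_of_mem_erase ht)]
        exact mul_pos (inv_pos.2 hL)
          (abs_pos.2 (lagrangeBasisAtZero_ne_zero (h0 hTΛ) t))
    · rcases mem_insert.mp ht with rfl | ht
      · exact hlt.le
      · exact (abs_eval_equioscillant (h0 hTΛ) (mem_of_mem_erase ht)).ge
  have := mul_le_mul_of_nonneg_left (hmin T' hT'Λ hcard) (inv_pos.2 hL).le
  rw [inv_mul_cancel₀ hL.ne'] at this
  linarith

noncomputable def spectralMinimax {ι : Type*} (lam : ι → ℝ) (k : ℕ) : ℝ :=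
  sInf {t | ∃ p : ℝ[X], p.natDegree ≤ k ∧ p.eval 0 = 1 ∧ t = ⨆ i, |p.eval (lam i)|}

section SpectralMinimax

variable {ι : Type*} [Fintype ι] {lam : ι → ℝ} {k : ℕ}

theorem spectralMinimax_eq_inv_lebesgueAtZero (hlam : ∀ i, 0 < lam i) {T : Finset ℝ}
    (hTΛ : T ⊆ univ.image lam) (hcard : #T = k + 1)
    (hmin : ∀ T' ⊆ univ.image lam, #T' = k + 1 → lebesgueAtZero T ≤ lebesgueAtZero T') :
    spectralMinimax lam k = (lebesgueAtZero T)⁻¹ := by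
  have hΛ : ∀ s ∈ univ.image lam, 0 < s := by simpa using hlam
  have hT : T.Nonempty := card_pos.mp (by omega)
  have hT0 : 0 ∉ T := fun h => (hΛ 0 (hTΛ h)).false
  have : Nonempty ι := by
    obtain ⟨t, ht⟩ := hT
    obtain ⟨i, -, -⟩ := mem_image.mp (hTΛ ht)
    exact ⟨i⟩
  have hlow : ∀ p : ℝ[X], p.natDegree ≤ k → p.eval 0 = 1 →
      (lebesgueAtZero T)⁻¹ ≤ ⨆ i, |p.eval (lam i)| := by
    intro p hp hp0
    rw [inv_le_iff_one_le_mul₀ (lebesgueAtZero_pos hT0 hT)]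
    refine one_le_mul_lebesgueAtZero (hcard ▸ degree_lt_succ_iff_natDegree_le.mpr hp) hp0
      fun t ht => ?_
    obtain ⟨i, -, rfl⟩ := mem_image.mp (hTΛ ht)
    exact le_ciSup (Set.finite_range fun i => |p.eval (lam i)|).bddAbove i
  have hpk := natDegree_equioscillant_le hcard
  have hp0 := eval_zero_equioscillant hT0 hT
  refine IsLeast.csInf_eq ⟨⟨equioscillant T, hpk, hp0, le_antisymm (hlow _ hpk hp0)
    (ciSup_le fun i => abs_eval_equioscillant_le hΛ hTΛ hT (hcard ▸ hmin)
      (mem_image_of_mem lam (mem_univ i)))⟩, ?_⟩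
  rintro _ ⟨p, hp, hp0, rfl⟩
  exact hlow p hp hp0

theorem exists_natDegree_le_eval_zero_eq_one {S : Finset ℝ} (h0 : 0 ∉ S) :
    ∃ p : ℝ[X], p.natDegree ≤ #S ∧ p.eval 0 = 1 ∧ ∀ s ∈ S, p.eval s = 0 := by
  refine ⟨C (∏ s ∈ S, -s)⁻¹ * ∏ s ∈ S, (X - C s), ?_, ?_, fun s hs => ?_⟩
  · exact (natDegree_C_mul_le _ _).trans (natDegree_finsetProd_X_sub_C_eq_card S id).le
  · simp only [eval_mul, eval_C, eval_prod, eval_sub, eval_X, zero_sub]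
    exact inv_mul_cancel₀
      (prod_ne_zero_iff.mpr fun s hs => neg_ne_zero.2 (ne_of_mem_of_not_mem hs h0))
  · simp [eval_prod, prod_eq_zero hs]

theorem spectralMinimax_eq_zero (hlam : ∀ i, lam i ≠ 0) (hk : #(univ.image lam) ≤ k) :
    spectralMinimax lam k = 0 := by
  obtain ⟨p, hp, hp0, hpΛ⟩ := exists_natDegree_le_eval_zero_eq_one (S := univ.image lam)
    (by simpa [eq_comm] using hlam)
  refine IsLeast.csInf_eq ⟨⟨p, hp.trans hk, hp0, ?_⟩, ?_⟩
  · simp [hpΛ _ (mem_image_of_mem lam (mem_univ _))]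
  · rintro _ ⟨q, -, -, rfl⟩
    exact Real.iSup_nonneg fun i => abs_nonneg _

end SpectralMinimax

section Eigenbasis

variable {n : Type*} [Fintype n]

theorem exists_sum_mul_sq_eq_sum (lam : n → ℝ) {T : Finset ℝ} (hT : T ⊆ univ.image lam)
    (ω : ℝ → ℝ) (hω : ∀ t ∈ T, 0 ≤ ω t) :
    ∃ c : n → ℝ, ∀ F : ℝ → ℝ, ∑ i, F (lam i) * c i ^ 2 = ∑ t ∈ T, F t * ω t := by
  set m : ℝ → ℕ := fun t => #{i | lam i = t}
  refine ⟨fun i => if lam i ∈ T then √(ω (lam i) / m (lam i)) else 0, fun F => ?_⟩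
  have hsq : ∀ i, F (lam i) * (if lam i ∈ T then √(ω (lam i) / m (lam i)) else 0) ^ 2 =
      if lam i ∈ T then F (lam i) * ω (lam i) / m (lam i) else 0 := fun i => by
    split_ifs with h
    · rw [Real.sq_sqrt (div_nonneg (hω _ h) (Nat.cast_nonneg _))]; ring
    · simp
  rw [sum_congr rfl fun i _ => hsq i,
    Finset.sum_comp (fun t => if t ∈ T then F t * ω t / m t else 0), ← sum_subset hT]
  · refine sum_congr rfl fun t ht => ?_
    have hm : (m t : ℝ) ≠ 0 := by
      obtain ⟨i, -, hi⟩ := mem_image.mp (hT ht)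
      exact Nat.cast_ne_zero.mpr (card_ne_zero.mpr ⟨i, by simp [hi]⟩)
    simp only [if_pos ht, nsmul_eq_mul]
    field_simp
    ring
  · intro t _ ht
    simp [ht]

variable [DecidableEq n] {A Q : Matrix n n ℝ} {lam : n → ℝ}

theorem aeval_eq_mul_diagonal_mul_transpose (hQ : Qᵀ * Q = 1)
    (hAQ : A = Q * diagonal lam * Qᵀ) (q : ℝ[X]) :
    aeval A q = Q * diagonal (fun i => q.eval (lam i)) * Qᵀ := by
  have hu : Q ∈ unitary (Matrix n n ℝ) :=
    ⟨by simpa [star_eq_conjTranspose] using hQ,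
     by simpa [star_eq_conjTranspose] using mul_eq_one_comm.mp hQ⟩
  have hconj : ∀ M, Unitary.conjStarAlgAut ℝ _ ⟨Q, hu⟩ M = Q * M * Qᵀ := fun M => by
    simp [star_eq_conjTranspose]
  rw [hAQ, ← hconj, aeval_algHom_apply, hconj, ← diagonalAlgHom_apply (R := ℝ),
    aeval_algHom_apply, aeval_pi_apply]
  simp [diagonalAlgHom_apply]

theorem aeval_mulVec_mulVec (hQ : Qᵀ * Q = 1) (hAQ : A = Q * diagonal lam * Qᵀ) (q : ℝ[X])
    (c : n → ℝ) : aeval A q *ᵥ (Q *ᵥ c) = Q *ᵥ fun i => q.eval (lam i) * c i := by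
  rw [aeval_eq_mul_diagonal_mul_transpose hQ hAQ, mulVec_mulVec, mul_assoc, hQ, mul_one,
    ← mulVec_mulVec]
  congr 1
  ext i
  exact mulVec_diagonal _ _ i

theorem mulVec_dotProduct_mulVec (hQ : Qᵀ * Q = 1) (u v : n → ℝ) :
    (Q *ᵥ u) ⬝ᵥ (Q *ᵥ v) = u ⬝ᵥ v := by
  rw [dotProduct_mulVec, ← mulVec_transpose, mulVec_mulVec, hQ, one_mulVec]

theorem aeval_dotProduct_mulVec_aeval (hQ : Qᵀ * Q = 1) (hAQ : A = Q * diagonal lam * Qᵀ)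
    (q r : ℝ[X]) (c : n → ℝ) :
    (aeval A q *ᵥ (Q *ᵥ c)) ⬝ᵥ (A *ᵥ (aeval A r *ᵥ (Q *ᵥ c))) =
      ∑ i, lam i * q.eval (lam i) * r.eval (lam i) * c i ^ 2 := by
  have hXr : A *ᵥ (aeval A r *ᵥ (Q *ᵥ c)) = aeval A (X * r) *ᵥ (Q *ᵥ c) := by
    rw [map_mul, aeval_X, mulVec_mulVec]
  rw [hXr, aeval_mulVec_mulVec hQ hAQ, aeval_mulVec_mulVec hQ hAQ,
    mulVec_dotProduct_mulVec hQ, dotProduct]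
  refine sum_congr rfl fun i _ => ?_
  simp only [eval_mul, eval_X]
  ring

theorem exists_aeval_dotProduct_mulVec_aeval_eq_sum (hQ : Qᵀ * Q = 1)
    (hAQ : A = Q * diagonal lam * Qᵀ) {T : Finset ℝ} (hT : T ⊆ univ.image lam)
    (hTpos : ∀ t ∈ T, 0 < t) (ω : ℝ → ℝ) (hω : ∀ t ∈ T, 0 ≤ ω t) :
    ∃ e : n → ℝ, ∀ q r : ℝ[X], (aeval A q *ᵥ e) ⬝ᵥ (A *ᵥ (aeval A r *ᵥ e)) =
      ∑ t ∈ T, q.eval t * r.eval t * ω t := by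
  obtain ⟨c, hc⟩ := exists_sum_mul_sq_eq_sum lam hT (fun t => ω t / t)
    fun t ht => div_nonneg (hω t ht) (hTpos t ht).le
  refine ⟨Q *ᵥ c, fun q r => ?_⟩
  rw [aeval_dotProduct_mulVec_aeval hQ hAQ, hc fun t => t * q.eval t * r.eval t]
  refine sum_congr rfl fun t ht => ?_
  have := (hTpos t ht).ne'
  field_simp

theorem posDef_of_eq_mul_diagonal_mul_transpose (hQ : Qᵀ * Q = 1)
    (hAQ : A = Q * diagonal lam * Qᵀ) (hlam : ∀ i, 0 < lam i) : A.PosDef := by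
  have hinj : Function.Injective Qᵀ.mulVec := fun u v h => by
    simpa [mulVec_mulVec, mul_eq_one_comm.mp hQ] using congrArg (Q *ᵥ ·) h
  simpa [hAQ, conjTranspose_eq_transpose_of_trivial] using
    (PosDef.diagonal hlam).conjTranspose_mul_mul_same hinj

end Eigenbasis

section Krylov

variable {N : ℕ} {A : Matrix (Fin N) (Fin N) ℝ}

noncomputable def anormInfDist (A : Matrix (Fin N) (Fin N) ℝ) (K : Submodule ℝ (Fin N → ℝ))
    (x₀ x : Fin N → ℝ) : ℝ :=
  sInf {t | ∃ z : Fin N → ℝ, (∃ v ∈ K, z = x₀ + v) ∧ t = Anorm A (x - z)}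

theorem anormInfDist_eq_of_orthogonal (hA : A.PosSemidef) {K : Submodule ℝ (Fin N → ℝ)}
    {x₀ x v₀ : Fin N → ℝ} (hv₀ : v₀ ∈ K) (horth : ∀ u ∈ K, (x - (x₀ + v₀)) ⬝ᵥ (A *ᵥ u) = 0) :
    anormInfDist A K x₀ x = Anorm A (x - (x₀ + v₀)) := by
  refine IsLeast.csInf_eq ⟨⟨x₀ + v₀, ⟨v₀, hv₀, rfl⟩, rfl⟩, ?_⟩
  rintro _ ⟨_, ⟨v, hv, rfl⟩, rfl⟩
  set y := x - (x₀ + v₀)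
  have hu : v₀ - v ∈ K := K.sub_mem hv₀ hv
  have hsymm : (v₀ - v) ⬝ᵥ (A *ᵥ y) = y ⬝ᵥ (A *ᵥ (v₀ - v)) := by
    rw [dotProduct_mulVec, ← mulVec_transpose, dotProduct_comm,
      ← conjTranspose_eq_transpose_of_trivial, hA.isHermitian.eq]
  have hnonneg := hA.dotProduct_mulVec_nonneg (v₀ - v)
  simp only [star_trivial] at hnonneg
  have hsplit : x - (x₀ + v) = y + (v₀ - v) := by simp only [y]; abel
  unfold Anorm
  gcongr
  rw [hsplit, mulVec_add, dotProduct_add, add_dotProduct, add_dotProduct, hsymm, horth _ hu]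
  linarith

theorem aeval_mulVec_mem_krylov {q : ℝ[X]} {k : ℕ} (hq : q.degree < k) (r : Fin N → ℝ) :
    aeval A q *ᵥ r ∈ krylov A r k := by
  rcases eq_or_ne q 0 with rfl | hq0
  · simp [(krylov A r k).zero_mem]
  rw [aeval_eq_sum_range' ((natDegree_lt_iff_degree_lt hq0).mpr hq), sum_mulVec]
  refine Submodule.sum_mem _ fun i hi => ?_
  rw [smul_mulVec]
  exact Submodule.smul_mem _ _ (Submodule.subset_span ⟨i, mem_range.mp hi, rfl⟩)

theorem sub_aeval_mulVec_mem_krylov {p : ℝ[X]} {k : ℕ} (hp : p.natDegree ≤ k)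
    (hp0 : p.eval 0 = 1) (e : Fin N → ℝ) : e - aeval A p *ᵥ e ∈ krylov A (A *ᵥ e) k := by
  set q := 1 - p
  have hq0 : q.coeff 0 = 0 := by simp [q, coeff_zero_eq_eval_zero, hp0]
  have hq : aeval A q = aeval A q.divX * A := by
    conv_lhs => rw [← divX_mul_X_add q, hq0]
    simp
  have hdeg : q.divX.degree < k := by
    rcases eq_or_ne q 0 with hq0 | hq0
    · simp [hq0]
    calc q.divX.degree < q.degree := degree_divX_lt hq0
      _ ≤ q.natDegree := degree_le_natDegree
      _ ≤ k := by
        gcongr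
        exact (natDegree_sub_le _ _).trans (by simpa using hp)
  have := aeval_mulVec_mem_krylov (A := A) hdeg (A *ᵥ e)
  rwa [mulVec_mulVec, ← hq, map_sub, map_one, sub_mulVec, one_mulVec] at this

theorem dotProduct_mulVec_eq_zero_of_mem_krylov {w r u : Fin N → ℝ} {k : ℕ}
    (h : ∀ i < k, w ⬝ᵥ (A *ᵥ (A ^ i *ᵥ r)) = 0) (hu : u ∈ krylov A r k) :
    w ⬝ᵥ (A *ᵥ u) = 0 := by
  induction hu using Submodule.span_induction with
  | mem x hx => obtain ⟨i, hi, rfl⟩ := hx; exact h i hi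
  | zero => simp
  | add x y _ _ hx hy => rw [mulVec_add, dotProduct_add, hx, hy, add_zero]
  | smul a x _ hx => rw [mulVec_smul, dotProduct_smul, hx, smul_zero]

end Krylov

section Greenbaum

variable {N : ℕ} {A Q : Matrix (Fin N) (Fin N) ℝ} {lam : Fin N → ℝ}

theorem anormInfDist_krylov_eq_zero (hQ : Qᵀ * Q = 1) (hAQ : A = Q * diagonal lam * Qᵀ)
    (hA : A.PosSemidef) (hlam : ∀ i, lam i ≠ 0) {k : ℕ} (hk : #(univ.image lam) ≤ k)
    (e : Fin N → ℝ) : anormInfDist A (krylov A (A *ᵥ e) k) 0 e = 0 := by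
  obtain ⟨p, hp, hp0, hpΛ⟩ := exists_natDegree_le_eval_zero_eq_one (S := univ.image lam)
    (by simpa [eq_comm] using hlam)
  have hpA : aeval A p = 0 := by
    rw [aeval_eq_mul_diagonal_mul_transpose hQ hAQ]
    simp [hpΛ _ (mem_image_of_mem lam (mem_univ _))]
  have heK := sub_aeval_mulVec_mem_krylov (A := A) (hp.trans hk) hp0 e
  rw [hpA, zero_mulVec, sub_zero] at heK
  rw [anormInfDist_eq_of_orthogonal hA heK (by simp), zero_add, sub_self, Anorm]
  simp

theorem exists_anormInfDist_krylov_eq_mul_spectralMinimax (hQ : Qᵀ * Q = 1)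
    (hAQ : A = Q * diagonal lam * Qᵀ) (hlam : ∀ i, 0 < lam i) {k : ℕ}
    (hk : k + 1 ≤ #(univ.image lam)) :
    ∃ e ≠ 0, anormInfDist A (krylov A (A *ᵥ e) k) 0 e = Anorm A e * spectralMinimax lam k := by
  obtain ⟨T, hT, hmin⟩ := exists_min_image ((univ.image lam).powersetCard (k + 1))
    lebesgueAtZero (powersetCard_nonempty.mpr hk)
  obtain ⟨hTΛ, hcard⟩ := mem_powersetCard.mp hT
  have hTpos : ∀ t ∈ T, 0 < t := fun t ht => by
    obtain ⟨i, -, rfl⟩ := mem_image.mp (hTΛ ht)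
    exact hlam i
  have hT0 : 0 ∉ T := fun h => (hTpos 0 h).false
  have hTne : T.Nonempty := card_pos.mp (by omega)
  have hL := lebesgueAtZero_pos hT0 hTne
  set M := (lebesgueAtZero T)⁻¹
  set p := equioscillant T
  obtain ⟨e, hspec⟩ := exists_aeval_dotProduct_mulVec_aeval_eq_sum hQ hAQ hTΛ hTpos
    (fun t => M * |lagrangeBasisAtZero T t|) fun _ _ => by positivity
  have hB : ∀ q r : ℝ[X], (aeval A q *ᵥ e) ⬝ᵥ (A *ᵥ (aeval A r *ᵥ e)) =
      M * ∑ t ∈ T, q.eval t * r.eval t * |lagrangeBasisAtZero T t| := fun q r => by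
    rw [hspec, mul_sum]
    exact sum_congr rfl fun _ _ => by ring
  have hp : p.natDegree ≤ k := natDegree_equioscillant_le hcard
  have hp0 : p.eval 0 = 1 := eval_zero_equioscillant hT0 hTne
  have he : Anorm A e = 1 := by
    have := hB 1 1
    simp only [map_one, one_mulVec, eval_one, one_mul] at this
    have hML : M * ∑ t ∈ T, |lagrangeBasisAtZero T t| = 1 := inv_mul_cancel₀ hL.ne'
    rw [Anorm, this, hML, Real.sqrt_one]
  have hpe : Anorm A (aeval A p *ᵥ e) = M := by
    rw [Anorm, hB, sum_eval_equioscillant_mul_mul_abs (degree_equioscillant_lt T), hp0, mul_one,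
      Real.sqrt_mul_self (inv_pos.2 hL).le]
  have horth : ∀ u ∈ krylov A (A *ᵥ e) k, (aeval A p *ᵥ e) ⬝ᵥ (A *ᵥ u) = 0 := fun u =>
    dotProduct_mulVec_eq_zero_of_mem_krylov fun i hi => by
      have hX : A ^ i *ᵥ (A *ᵥ e) = aeval A ((X : ℝ[X]) ^ (i + 1)) *ᵥ e := by
        rw [mulVec_mulVec, ← pow_succ, map_pow, aeval_X]
      have hdeg : ((X : ℝ[X]) ^ (i + 1)).degree < #T :=
        hcard ▸ degree_lt_succ_iff_natDegree_le.mpr ((natDegree_X_pow_le _).trans hi)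
      rw [hX, hB, sum_eval_equioscillant_mul_mul_abs hdeg]
      simp
  refine ⟨e, fun h => by simp [h, Anorm] at he, ?_⟩
  have hA := posDef_of_eq_mul_diagonal_mul_transpose hQ hAQ hlam
  rw [anormInfDist_eq_of_orthogonal hA.posSemidef (sub_aeval_mulVec_mem_krylov hp hp0 e)
    (by simpa using horth), spectralMinimax_eq_inv_lebesgueAtZero hlam hTΛ hcard
      fun T' hT' hc => hmin T' (mem_powersetCard.mpr ⟨hT', hc⟩), he,
    one_mul, zero_add, sub_sub_cancel, hpe]

end Greenbaum

theorem stmt_4_general {N : ℕ} (hN : 0 < N) (A Q : Matrix (Fin N) (Fin N) ℝ) (lam : Fin N → ℝ)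
    (hlam : ∀ i, 0 < lam i) (hQ : Qᵀ * Q = 1)
    (hAQ : A = Q * Matrix.diagonal lam * Qᵀ)
    (k : ℕ) :
    ∃ b x₀ : Fin N → ℝ, b - A *ᵥ x₀ ≠ 0 ∧ x₀ ≠ A⁻¹ *ᵥ b ∧
      sInf {t | ∃ z : Fin N → ℝ, (∃ v ∈ krylov A (b - A *ᵥ x₀) k, z = x₀ + v) ∧
          t = Anorm A (A⁻¹ *ᵥ b - z)} =
        Anorm A (A⁻¹ *ᵥ b - x₀) *
          sInf {t | ∃ p : Polynomial ℝ, p.natDegree ≤ k ∧ p.eval 0 = 1 ∧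
            t = ⨆ i, |p.eval (lam i)|} := by
  have hA := posDef_of_eq_mul_diagonal_mul_transpose hQ hAQ hlam
  have hinv : ∀ e, A⁻¹ *ᵥ (A *ᵥ e) = e := fun e => by
    rw [mulVec_mulVec, nonsing_inv_mul _ ((isUnit_iff_isUnit_det A).mp hA.isUnit), one_mulVec]
  obtain ⟨e, he, hopt⟩ : ∃ e ≠ 0,
      anormInfDist A (krylov A (A *ᵥ e) k) 0 e = Anorm A e * spectralMinimax lam k := by
    rcases lt_or_ge #(univ.image lam) (k + 1) with hsmall | hlarge
    · refine ⟨fun _ => 1, fun h => one_ne_zero (congrFun h ⟨0, hN⟩), ?_⟩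
      rw [anormInfDist_krylov_eq_zero hQ hAQ hA.posSemidef (fun i => (hlam i).ne')
        (Nat.lt_succ_iff.mp hsmall), spectralMinimax_eq_zero (fun i => (hlam i).ne')
        (Nat.lt_succ_iff.mp hsmall), mul_zero]
    · exact exists_anormInfDist_krylov_eq_mul_spectralMinimax hQ hAQ hlam hlarge
  refine ⟨A *ᵥ e, 0, ?_, ?_, ?_⟩ <;> simp only [mulVec_zero, sub_zero, hinv]
  · exact fun h => he (by simpa [hinv] using congrArg (A⁻¹ *ᵥ ·) h)
  · exact he.symm
  · exact hopt

theorem stmt_4 {N : ℕ} (hN : 0 < N) (A Q : Matrix (Fin N) (Fin N) ℝ) (lam : Fin N → ℝ)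
    (hlam : ∀ i, 0 < lam i) (hQ : Qᵀ * Q = 1)
    (hAQ : A = Q * Matrix.diagonal lam * Qᵀ)
    (k : ℕ) (hk : k ≤ (minpoly ℝ A).natDegree) :
    ∃ b x₀ : Fin N → ℝ, b - A *ᵥ x₀ ≠ 0 ∧ x₀ ≠ A⁻¹ *ᵥ b ∧
      sInf {t | ∃ z : Fin N → ℝ, (∃ v ∈ krylov A (b - A *ᵥ x₀) k, z = x₀ + v) ∧
          t = Anorm A (A⁻¹ *ᵥ b - z)} =
        Anorm A (A⁻¹ *ᵥ b - x₀) *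
          sInf {t | ∃ p : Polynomial ℝ, p.natDegree ≤ k ∧ p.eval 0 = 1 ∧
            t = ⨆ i, |p.eval (lam i)|} :=
  stmt_4_general hN A Q lam hlam hQ hAQ k
end

section
/- (Greenbaum–Gurvits, Joubert) Let A ∈ ℂ^{N×N} be a nonsingular normal matrix with eigenvalues λ₁,…,λ_N. Then for every k ≥ 0 there exists a nonzero vector r₀ ∈ ℂ^N such that min over p ∈ P_k(0) of ‖p(A)r₀‖₂ equals ‖r₀‖₂ times min over p ∈ P_k(0) of max over 1 ≤ i ≤ N of |p(λ_i)|; i.e., for normal matrices the eigenvalue min-max bound on the GMRES residual is sharp at every step. -/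
open Matrix Polynomial

/-- The Euclidean norm of a complex vector. -/
noncomputable def cenorm {N : ℕ} (v : Fin N → ℂ) : ℝ :=
  Real.sqrt (∑ i, ‖v i‖ ^ 2)

/-!
The vectors `(p(λ₁), …, p(λ_N))` with `p ∈ P_k(0)` form an affine subspace `1 + V` of `ℂᴺ`; let `v`
be a point of it of least sup norm. By Kolmogorov's criterion no direction `u ∈ V` decreases all
coordinates of maximal modulus to first order, so Gordan's alternative gives a probability vector
`w`, supported on those coordinates, with `∑ wᵢ Re(v̄ᵢ uᵢ) = 0` for `u ∈ V`. Cauchy–Schwarz then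
shows that `v` also minimises the weighted norm `(∑ wᵢ |sᵢ|²)^(1/2)` over `s ∈ 1 + V`, with the same
value `‖v‖_∞`. As `A = U diag(λ) Uᴴ` with `U` unitary, for `r₀ = U (√wᵢ)ᵢ` the residual norm
`‖p(A) r₀‖₂` is exactly this weighted norm of `p(λ)`.
-/

open Filter Topology
open scoped InnerProductSpace

section Duality

variable {ι : Type*} [Fintype ι]

/-- Gordan's alternative, by separating `S` from the open negative orthant. -/
theorem Submodule.exists_mem_stdSimplex_sum_mul_eq_zero (S : Submodule ℝ (ι → ℝ))
    (hS : ∀ x ∈ S, ∃ i, 0 ≤ x i) :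
    ∃ w ∈ stdSimplex ℝ ι, ∀ x ∈ S, ∑ i, w i * x i = 0 := by
  classical
  set O : Set (ι → ℝ) := Set.univ.pi fun _ ↦ Set.Iio 0
  have hOS : Disjoint O S := Set.disjoint_left.2 fun x hxO hxS ↦
    let ⟨i, hi⟩ := hS x hxS; (hxO i (Set.mem_univ i)).not_ge hi
  obtain ⟨f, u, hfO, hfS⟩ := geometric_hahn_banach_open
    (convex_pi fun _ _ ↦ convex_Iio 0) (isOpen_set_pi Set.finite_univ fun _ _ ↦ isOpen_Iio)
    S.convex hOS
  have hu : u ≤ 0 := by simpa using hfS 0 S.zero_mem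
  have hf_closure : ∀ x ∈ closure O, f x ≤ u := fun _ hx ↦
    closure_minimal (fun y hy ↦ (hfO y hy).le) (isClosed_le f.continuous continuous_const) hx
  set w : ι → ℝ := fun i ↦ f (Pi.single i 1)
  have hf : ∀ x, f x = ∑ i, w i * x i := by
    intro x
    conv_lhs => rw [← Finset.univ_sum_single x]
    rw [map_sum]
    congr! 1 with i
    rw [mul_comm, ← smul_eq_mul, ← map_smul, ← Pi.single_smul, smul_eq_mul, mul_one]
  have hw : ∀ i, 0 ≤ w i := by
    intro i
    have : -Pi.single i 1 ∈ closure O := by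
      rw [closure_pi_set]
      intro j _
      simpa [closure_Iio] using
        (Pi.single_nonneg.2 zero_le_one : (0 : ι → ℝ) ≤ Pi.single i 1) j
    have := (hf_closure _ this).trans hu
    rwa [map_neg, neg_nonpos] at this
  have hsum : 0 < ∑ i, w i := by
    have := (hfO (-1) fun i _ ↦ by simp).trans_le hu
    simpa [hf] using this
  refine ⟨fun i ↦ w i / ∑ j, w j, ⟨fun i ↦ div_nonneg (hw i) hsum.le, ?_⟩, fun x hx ↦ ?_⟩
  · rw [← Finset.sum_div, div_self hsum.ne']
  · have hfx : f x = 0 := by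
      by_contra hne
      have := hfS _ (S.smul_mem ((u - 1) / f x) hx)
      rw [map_smul, smul_eq_mul, div_mul_cancel₀ _ hne] at this
      linarith
    simp_rw [div_mul_eq_mul_div, ← Finset.sum_div, ← hf, hfx, zero_div]

theorem Submodule.exists_mem_stdSimplex_sum_mul_eq_zero_supported (S : Submodule ℝ (ι → ℝ))
    (P : ι → Prop) (hS : ∀ x ∈ S, ∃ i, P i ∧ 0 ≤ x i) :
    ∃ w ∈ stdSimplex ℝ ι, (∀ i, ¬P i → w i = 0) ∧ ∀ x ∈ S, ∑ i, w i * x i = 0 := by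
  classical
  set D : Submodule ℝ (ι → ℝ) := ⨅ (i) (_ : P i), LinearMap.ker (LinearMap.proj i)
  obtain ⟨w, hw, horth⟩ := (S ⊔ D).exists_mem_stdSimplex_sum_mul_eq_zero <| by
    intro x hx
    obtain ⟨y, hy, z, hz, rfl⟩ := Submodule.mem_sup.1 hx
    obtain ⟨i, hi, hyi⟩ := hS y hy
    simp only [D, Submodule.mem_iInf, LinearMap.mem_ker, LinearMap.proj_apply] at hz
    exact ⟨i, by simpa [hz i hi] using hyi⟩
  refine ⟨w, hw, fun i hi ↦ ?_, fun x hx ↦ horth x (Submodule.mem_sup_left hx)⟩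
  have hsingle : Pi.single i 1 ∈ D := by
    simp only [D, Submodule.mem_iInf, LinearMap.mem_ker, LinearMap.proj_apply]
    intro j hj
    exact Pi.single_eq_of_ne (ne_of_apply_ne P (by simp [hj, hi])) 1
  simpa [Pi.single_apply] using horth _ (Submodule.mem_sup_right hsingle)

variable {E : Type*} [NormedAddCommGroup E] [InnerProductSpace ℝ E]

/-- Kolmogorov's criterion for best approximation in the sup norm. -/
theorem exists_norm_eq_and_inner_nonneg_of_forall_norm_le [Nonempty ι] {v u : ι → E}
    (hu : ∀ t : ℝ, 0 < t → ‖v‖ ≤ ‖v + t • u‖) : ∃ i, ‖v i‖ = ‖v‖ ∧ 0 ≤ ⟪v i, u i⟫_ℝ := by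
  by_contra! h
  have hdescent : ∀ i, ∀ᶠ t in 𝓝[>] (0 : ℝ), ‖v i + t • u i‖ < ‖v‖ := by
    intro i
    rcases (norm_le_pi_norm v i).lt_or_eq with hlt | heq
    · have hcont : Tendsto (fun t : ℝ ↦ ‖v i + t • u i‖) (𝓝 0) (𝓝 ‖v i‖) := by
        have : Continuous fun t : ℝ ↦ ‖v i + t • u i‖ := by fun_prop
        simpa using this.tendsto 0
      exact nhdsWithin_le_nhds (hcont.eventually (eventually_lt_nhds hlt))
    · have hsmall : ∀ᶠ t in 𝓝 (0 : ℝ), t * ‖u i‖ ^ 2 < -2 * ⟪v i, u i⟫_ℝ := by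
        have : Tendsto (fun t : ℝ ↦ t * ‖u i‖ ^ 2) (𝓝 0) (𝓝 0) := by
          have : Continuous fun t : ℝ ↦ t * ‖u i‖ ^ 2 := by fun_prop
          simpa using this.tendsto 0
        exact this.eventually (eventually_lt_nhds (by linarith [h i heq]))
      filter_upwards [nhdsWithin_le_nhds hsmall, self_mem_nhdsWithin] with t ht htpos
      have hsq : ‖v i + t • u i‖ ^ 2 = ‖v i‖ ^ 2 + t * (2 * ⟪v i, u i⟫_ℝ + t * ‖u i‖ ^ 2) := by
        rw [norm_add_sq_real, real_inner_smul_right, norm_smul, Real.norm_of_nonneg htpos.le]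
        ring
      refine lt_of_pow_lt_pow_left₀ 2 (norm_nonneg _) ?_
      rw [hsq, heq]
      nlinarith [Set.mem_Ioi.1 htpos]
  obtain ⟨t, htpos, ht⟩ := (eventually_mem_nhdsWithin.and (eventually_all.2 hdescent)).exists
  have hv : 0 < ‖v‖ := (norm_nonneg _).trans_lt (ht (Classical.arbitrary ι))
  exact (hu t htpos).not_gt ((pi_norm_lt_iff hv).2 ht)

theorem exists_mem_stdSimplex_weighted_norm_sq_eq_and_le [Nonempty ι] {V : Submodule ℝ (ι → E)}
    {v : ι → E} (hv : ∀ u ∈ V, ‖v‖ ≤ ‖v + u‖) :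
    ∃ w ∈ stdSimplex ℝ ι, ∑ i, w i * ‖v i‖ ^ 2 = ‖v‖ ^ 2 ∧
      ∀ u ∈ V, ‖v‖ ^ 2 ≤ ∑ i, w i * ‖v i + u i‖ ^ 2 := by
  set L : (ι → E) →ₗ[ℝ] (ι → ℝ) := LinearMap.pi fun i ↦ innerₛₗ ℝ (v i) ∘ₗ LinearMap.proj i
  obtain ⟨w, hw, hsupp, horth⟩ := (V.map L).exists_mem_stdSimplex_sum_mul_eq_zero_supported
    (fun i ↦ ‖v i‖ = ‖v‖) <| by
      rintro _ ⟨u, hu, rfl⟩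
      simpa [L] using
        exists_norm_eq_and_inner_nonneg_of_forall_norm_le fun t _ ↦ hv _ (V.smul_mem t hu)
  have hv_sq : ∑ i, w i * ‖v i‖ ^ 2 = ‖v‖ ^ 2 := by
    have : ∀ i, w i * ‖v i‖ ^ 2 = w i * ‖v‖ ^ 2 := fun i ↦ by
      by_cases h : ‖v i‖ = ‖v‖
      · rw [h]
      · simp [hsupp i h]
    simp [this, ← Finset.sum_mul, hw.2]
  refine ⟨w, hw, hv_sq, fun u hu ↦ ?_⟩
  have hinner : ‖v‖ ^ 2 ≤ ∑ i, w i * (‖v i‖ * ‖v i + u i‖) := calc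
    ‖v‖ ^ 2 = ∑ i, w i * ⟪v i, v i + u i⟫_ℝ := by
      have := horth (L u) ⟨u, hu, rfl⟩
      simp only [L, LinearMap.pi_apply, LinearMap.comp_apply, LinearMap.proj_apply,
        coe_innerₛₗ_apply] at this
      simp [inner_add_right, mul_add, Finset.sum_add_distrib, this, hv_sq]
    _ ≤ _ := Finset.sum_le_sum fun i _ ↦
      mul_le_mul_of_nonneg_left (real_inner_le_norm _ _) (hw.1 i)
  have hcs : (∑ i, w i * (‖v i‖ * ‖v i + u i‖)) ^ 2 ≤
      ‖v‖ ^ 2 * ∑ i, w i * ‖v i + u i‖ ^ 2 := by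
    rw [← hv_sq]
    refine Finset.sum_sq_le_sum_mul_sum_of_sq_le_mul _ (fun i _ ↦ ?_) (fun i _ ↦ ?_)
      (fun i _ ↦ le_of_eq (by ring)) <;> exact mul_nonneg (hw.1 i) (sq_nonneg _)
  have hT : 0 ≤ ∑ i, w i * ‖v i + u i‖ ^ 2 :=
    Finset.sum_nonneg fun i _ ↦ mul_nonneg (hw.1 i) (sq_nonneg _)
  nlinarith [sq_nonneg ‖v‖, pow_le_pow_left₀ (sq_nonneg ‖v‖) hinner 2]

theorem exists_mem_stdSimplex_isLeast_norm_and_isLeast_weighted_norm [Nonempty ι]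
    [FiniteDimensional ℝ E] (V : Submodule ℝ (ι → E)) (c : ι → E) :
    ∃ w ∈ stdSimplex ℝ ι, ∃ m : ℝ, IsLeast {t | ∃ u, u - c ∈ V ∧ t = ‖u‖} m ∧
      IsLeast {t | ∃ u, u - c ∈ V ∧ t = √(∑ i, w i * ‖u i‖ ^ 2)} m := by
  set K : Set (ι → E) := {u | u - c ∈ V}
  have hK : IsClosed K :=
    V.closed_of_finiteDimensional.preimage (continuous_id.sub continuous_const)
  obtain ⟨v, hvK, hv⟩ := hK.exists_infDist_eq_dist ⟨c, by simp [K]⟩ 0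
  have hmin : ∀ u ∈ K, ‖v‖ ≤ ‖u‖ := fun u hu ↦ by
    simpa [hv] using Metric.infDist_le_dist_of_mem hu (x := 0)
  obtain ⟨w, hw, hwv, hwle⟩ := exists_mem_stdSimplex_weighted_norm_sq_eq_and_le (V := V)
    fun u hu ↦ hmin _ (by simpa [K, sub_add_eq_add_sub] using V.add_mem hvK hu)
  refine ⟨w, hw, ‖v‖, ⟨⟨v, hvK, rfl⟩, ?_⟩,
    ⟨⟨v, hvK, by rw [hwv, Real.sqrt_sq (norm_nonneg _)]⟩, ?_⟩⟩
  · rintro _ ⟨u, hu, rfl⟩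
    exact hmin u hu
  · rintro _ ⟨u, hu, rfl⟩
    have := hwle (u - v) (by simpa using V.sub_mem hu hvK)
    exact Real.le_sqrt_of_sq_le (by simpa using this)

end Duality

namespace Matrix

variable {n R : Type*} [Fintype n] [DecidableEq n] [CommRing R]

theorem aeval_diagonal (d : n → R) (p : R[X]) :
    aeval (diagonal d) p = diagonal fun i ↦ p.eval (d i) := by
  simpa [aeval_pi_apply] using aeval_algHom_apply (diagonalAlgHom R) d p

theorem aeval_mul_diagonal_mul_conjTranspose [StarRing R] {U : Matrix n n R} (hU : Uᴴ * U = 1)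
    (d : n → R) (p : R[X]) :
    aeval (U * diagonal d * Uᴴ) p = U * diagonal (fun i ↦ p.eval (d i)) * Uᴴ := by
  have hU' : U ∈ unitary (Matrix n n R) := mem_unitaryGroup_iff'.2 hU
  simpa [aeval_diagonal, star_eq_conjTranspose] using
    aeval_algHom_apply (Unitary.conjStarAlgAut R (Matrix n n R) ⟨U, hU'⟩) (diagonal d) p

theorem cenorm_mulVec_of_conjTranspose_mul_self {N : ℕ} {U : Matrix (Fin N) (Fin N) ℂ}
    (hU : Uᴴ * U = 1) (x : Fin N → ℂ) : cenorm (U *ᵥ x) = cenorm x := by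
  have hdot : star (U *ᵥ x) ⬝ᵥ (U *ᵥ x) = star x ⬝ᵥ x := by
    rw [star_mulVec, ← dotProduct_mulVec, mulVec_mulVec, hU, one_mulVec]
  have hsum : ∀ y : Fin N → ℂ, star y ⬝ᵥ y = ((∑ i, ‖y i‖ ^ 2 : ℝ) : ℂ) := fun y ↦ by
    simp [dotProduct, Complex.conj_mul']
  rw [hsum, hsum] at hdot
  simp only [cenorm, Complex.ofReal_inj.1 hdot]

theorem cenorm_mul_sqrt {N : ℕ} (d : Fin N → ℂ) {w : Fin N → ℝ} (hw : ∀ i, 0 ≤ w i) :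
    cenorm (fun i ↦ d i * (√(w i) : ℂ)) = √(∑ i, w i * ‖d i‖ ^ 2) := by
  simp [cenorm, mul_pow, Real.sq_sqrt (hw _), mul_comm]

end Matrix

theorem pi_norm_eq_ciSup {ι E : Type*} [Fintype ι] [Nonempty ι] [SeminormedAddCommGroup E]
    (x : ι → E) : ‖x‖ = ⨆ i, ‖x i‖ :=
  le_antisymm
    ((pi_norm_le_iff_of_nonempty _).2 fun i ↦ le_ciSup (f := (‖x ·‖)) (Finite.bddAbove_range _) i)
    (ciSup_le (norm_le_pi_norm x))

theorem natDegree_le_and_eval_zero_eq_one_iff {R : Type*} [CommRing R] {k : ℕ} {p : R[X]} :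
    p.natDegree ≤ k ∧ p.eval 0 = 1 ↔ p - 1 ∈ degreeLE R k ⊓ LinearMap.ker (lcoeff R 0) := by
  have hone : (1 : R[X]) ∈ degreeLE R k := mem_degreeLE.2 (degree_one_le.trans (by simp))
  rw [Submodule.mem_inf, Submodule.sub_mem_iff_left _ hone, mem_degreeLE,
    natDegree_le_iff_degree_le, LinearMap.mem_ker, map_sub, lcoeff_apply, lcoeff_apply,
    coeff_zero_eq_eval_zero, coeff_one_zero, sub_eq_zero]

noncomputable def vanishingAtZeroValues {ι : Type*} (lam : ι → ℂ) (k : ℕ) :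
    Submodule ℂ (ι → ℂ) :=
  (degreeLE ℂ k ⊓ LinearMap.ker (lcoeff ℂ 0)).map (aeval lam).toLinearMap

theorem setOf_residualPolynomial_eq {ι : Type*} (lam : ι → ℂ) (k : ℕ) (f : (ι → ℂ) → ℝ) :
    {t | ∃ p : ℂ[X], p.natDegree ≤ k ∧ p.eval 0 = 1 ∧ t = f fun i ↦ p.eval (lam i)} =
      {t | ∃ u, u - 1 ∈ vanishingAtZeroValues lam k ∧ t = f u} := by
  have heval : ∀ p : ℂ[X], (aeval lam).toLinearMap p = fun i ↦ p.eval (lam i) := fun p ↦ by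
    simp [aeval_pi_apply]
  ext t
  constructor
  · rintro ⟨p, hdeg, h0, rfl⟩
    refine ⟨_, ⟨p - 1, natDegree_le_and_eval_zero_eq_one_iff.1 ⟨hdeg, h0⟩, ?_⟩, rfl⟩
    rw [heval]
    ext i
    simp
  · rintro ⟨u, ⟨q, hq, hqu⟩, rfl⟩
    obtain ⟨hdeg, h0⟩ :=
      (natDegree_le_and_eval_zero_eq_one_iff (p := q + 1)).2 (by simpa using hq)
    refine ⟨q + 1, hdeg, h0, congrArg f (funext fun i ↦ ?_)⟩
    rw [heval] at hqu
    simp [congrFun hqu i]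

theorem stmt_12_general {N : ℕ} (hN : 0 < N) (A U : Matrix (Fin N) (Fin N) ℂ) (lam : Fin N → ℂ)
    (hU : Uᴴ * U = 1) (hdiag : A = U * Matrix.diagonal lam * Uᴴ) (k : ℕ) :
    ∃ r₀ : Fin N → ℂ, r₀ ≠ 0 ∧
      sInf {t | ∃ p : Polynomial ℂ, p.natDegree ≤ k ∧ p.eval 0 = 1 ∧
          t = cenorm ((aeval A p) *ᵥ r₀)} =
        cenorm r₀ *
          sInf {t | ∃ p : Polynomial ℂ, p.natDegree ≤ k ∧ p.eval 0 = 1 ∧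
            t = ⨆ i, ‖p.eval (lam i)‖} := by
  have : Nonempty (Fin N) := ⟨⟨0, hN⟩⟩
  obtain ⟨w, hw, m, hsupNorm, hweighted⟩ :=
    exists_mem_stdSimplex_isLeast_norm_and_isLeast_weighted_norm
      ((vanishingAtZeroValues lam k).restrictScalars ℝ) 1
  set x : Fin N → ℂ := fun i ↦ (√(w i) : ℂ)
  have hnorm : cenorm (U *ᵥ x) = 1 := by
    rw [cenorm_mulVec_of_conjTranspose_mul_self hU]
    simpa [x, hw.2] using cenorm_mul_sqrt 1 hw.1
  have hres : ∀ p : ℂ[X],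
      cenorm (aeval A p *ᵥ (U *ᵥ x)) = √(∑ i, w i * ‖p.eval (lam i)‖ ^ 2) := by
    intro p
    rw [hdiag, aeval_mul_diagonal_mul_conjTranspose hU, mulVec_mulVec, Matrix.mul_assoc, hU,
      Matrix.mul_one, ← mulVec_mulVec, cenorm_mulVec_of_conjTranspose_mul_self hU]
    rw [show diagonal _ *ᵥ x = fun i ↦ p.eval (lam i) * x i from funext (mulVec_diagonal _ _)]
    exact cenorm_mul_sqrt (fun i ↦ p.eval (lam i)) hw.1
  have hciSup : ∀ p : ℂ[X], ⨆ i, ‖p.eval (lam i)‖ = ‖fun i ↦ p.eval (lam i)‖ :=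
    fun p ↦ (pi_norm_eq_ciSup _).symm
  refine ⟨U *ᵥ x, fun h ↦ by simp [h, cenorm] at hnorm, ?_⟩
  have hsetWeighted := setOf_residualPolynomial_eq lam k fun u ↦ √(∑ i, w i * ‖u i‖ ^ 2)
  have hsetSup := setOf_residualPolynomial_eq lam k fun u ↦ ‖u‖
  dsimp only at hsetWeighted hsetSup
  simp only [hres, hciSup, hnorm, one_mul, hsetWeighted, hsetSup]
  exact hweighted.csInf_eq.trans hsupNorm.csInf_eq.symm

theorem stmt_12 {N : ℕ} (hN : 0 < N) (A U : Matrix (Fin N) (Fin N) ℂ) (lam : Fin N → ℂ)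
    (hA : IsUnit A.det) (hnormal : A * Aᴴ = Aᴴ * A)
    (hU : Uᴴ * U = 1) (hdiag : A = U * Matrix.diagonal lam * Uᴴ) (k : ℕ) :
    ∃ r₀ : Fin N → ℂ, r₀ ≠ 0 ∧
      sInf {t | ∃ p : Polynomial ℂ, p.natDegree ≤ k ∧ p.eval 0 = 1 ∧
          t = cenorm ((aeval A p) *ᵥ r₀)} =
        cenorm r₀ *
          sInf {t | ∃ p : Polynomial ℂ, p.natDegree ≤ k ∧ p.eval 0 = 1 ∧
            t = ⨆ i, ‖p.eval (lam i)‖} :=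
  stmt_12_general hN A U lam hU hdiag k
end
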